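/- Let r > b, σ > 0, m > 1, l > 0, let ρ < 0 be the negative root of (σ²/2)ρ(ρ−1) + bρ − r = 0, set x_R = (ρ/(ρ−1))(r − b) l, α = x_R/m, and θ = ((1 − m^ρ)/((−ρ)(m − 1)))^{1/(1−ρ)}. Then x = θ x_R is a solution in (α, x_R) of the equation (x/x_R)^ρ · (l − x_R/(r−b)) = ((m−1)/(r−b)) x + (l/(1−ρ)) (x/α)^ρ. -/

import Mathlib

/-!
Since `x_R = ρ/(ρ-1) (r-b) l`, the exit payoff is `l - x_R/(r-b) = l/(1-ρ)`, and with `x = θ x_R`,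
`x/α = θ m` the equation becomes `θ^ρ (1 - m^ρ) = (-ρ)(m-1) θ`, i.e. `θ^(1-ρ) = A` for
`A = (1 - m^ρ)/((-ρ)(m-1))`: this is how `θ` is defined. The bounds `α < x < x_R` mean
`m⁻¹ < θ < 1`, i.e. `m^(ρ-1) < A < 1`; both are the strict tangent-line inequality
`1 + ρ (y - 1) < y^ρ` of the convex function `y ↦ y^ρ`, at `y = m` and at `y = m⁻¹`.
-/

open Real

theorem one_add_mul_sub_one_lt_rpow_of_neg {x p : ℝ} (hx : 0 < x) (hx1 : x ≠ 1) (hp : p < 0) :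
    1 + p * (x - 1) < x ^ p := by
  have hlog : p * (x - 1) < p * log x := mul_lt_mul_of_neg_left (log_lt_sub_one_of_pos hx hx1) hp
  calc 1 + p * (x - 1) < p * log x + 1 := by linarith
    _ ≤ exp (p * log x) := add_one_le_exp _
    _ = x ^ p := by rw [rpow_def_of_pos hx, mul_comm]

section Threshold

variable {m ρ : ℝ}

theorem one_sub_rpow_div_lt_one (hm : 1 < m) (hρ : ρ < 0) :
    (1 - m ^ ρ) / ((-ρ) * (m - 1)) < 1 := by
  rw [div_lt_one (by nlinarith)]
  linarith [one_add_mul_sub_one_lt_rpow_of_neg (by linarith) hm.ne' hρ]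

theorem inv_rpow_one_sub_lt_one_sub_rpow_div (hm : 1 < m) (hρ : ρ < 0) :
    m⁻¹ ^ (1 - ρ) < (1 - m ^ ρ) / ((-ρ) * (m - 1)) := by
  have hm0 : 0 < m := by linarith
  set t := m⁻¹ with ht
  have ht0 : 0 < t := inv_pos.mpr hm0
  have htρ : 0 < t ^ ρ := rpow_pos_of_pos ht0 ρ
  have hbern := one_add_mul_sub_one_lt_rpow_of_neg ht0 (inv_ne_one.mpr hm.ne') hρ
  have hmρ : m ^ ρ = (t ^ ρ)⁻¹ := by rw [ht, inv_rpow hm0.le, inv_inv]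
  have htpow : t ^ (1 - ρ) = t / t ^ ρ := by rw [rpow_sub ht0, rpow_one]
  have htm : t * m = 1 := inv_mul_cancel₀ hm0.ne'
  rw [lt_div_iff₀ (by nlinarith), htpow, hmρ, div_mul_eq_mul_div, div_lt_iff₀ htρ, sub_mul,
    inv_mul_cancel₀ htρ.ne', one_mul]
  calc t * (-ρ * (m - 1)) = -ρ * (1 - t) := by linear_combination (-ρ) * htm
    _ < t ^ ρ - 1 := by linarith

/-- The threshold ratio `θ = x̄ / x_R` of the paper. -/
noncomputable def exitThreshold (m ρ : ℝ) : ℝ :=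
  ((1 - m ^ ρ) / ((-ρ) * (m - 1))) ^ (1 / (1 - ρ))

theorem one_sub_rpow_div_pos (hm : 1 < m) (hρ : ρ < 0) : 0 < (1 - m ^ ρ) / ((-ρ) * (m - 1)) :=
  (rpow_pos_of_pos (inv_pos.mpr (by linarith)) _).trans
    (inv_rpow_one_sub_lt_one_sub_rpow_div hm hρ)

theorem exitThreshold_pos (hm : 1 < m) (hρ : ρ < 0) : 0 < exitThreshold m ρ :=
  rpow_pos_of_pos (one_sub_rpow_div_pos hm hρ) _

theorem exitThreshold_rpow_one_sub (hm : 1 < m) (hρ : ρ < 0) :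
    exitThreshold m ρ ^ (1 - ρ) = (1 - m ^ ρ) / ((-ρ) * (m - 1)) := by
  rw [exitThreshold, one_div, rpow_inv_rpow (one_sub_rpow_div_pos hm hρ).le (by linarith)]

theorem exitThreshold_mem_Ioo (hm : 1 < m) (hρ : ρ < 0) : exitThreshold m ρ ∈ Set.Ioo m⁻¹ 1 := by
  have hs : 0 < 1 - ρ := by linarith
  have hθ := (exitThreshold_pos hm hρ).le
  constructor
  · rw [← rpow_lt_rpow_iff (inv_pos.mpr (by linarith)).le hθ hs, exitThreshold_rpow_one_sub hm hρ]
    exact inv_rpow_one_sub_lt_one_sub_rpow_div hm hρ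
  · rw [← rpow_lt_rpow_iff hθ zero_le_one hs, exitThreshold_rpow_one_sub hm hρ, one_rpow]
    exact one_sub_rpow_div_lt_one hm hρ

theorem exitThreshold_rpow_mul_one_sub_rpow (hm : 1 < m) (hρ : ρ < 0) :
    exitThreshold m ρ ^ ρ * (1 - m ^ ρ) = (-ρ) * (m - 1) * exitThreshold m ρ := by
  have hd : (-ρ) * (m - 1) ≠ 0 := by nlinarith
  have hsplit : exitThreshold m ρ ^ ρ * exitThreshold m ρ ^ (1 - ρ) = exitThreshold m ρ := by
    rw [← rpow_add (exitThreshold_pos hm hρ), add_sub_cancel, rpow_one]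
  rw [exitThreshold_rpow_one_sub hm hρ, mul_div_assoc', div_eq_iff hd] at hsplit
  linear_combination hsplit

end Threshold

theorem indifference_threshold_solution_general
    (r b m l ρ : ℝ)
    (hrb : b < r) (hm : 1 < m) (hl : 0 < l) (hρ : ρ < 0)
    (xR α θ : ℝ)
    (hxR : xR = ρ/(ρ - 1) * (r - b) * l) (hα : α = xR/m)
    (hθ : θ = ((1 - m ^ ρ) / ((-ρ) * (m - 1))) ^ (1/(1 - ρ))) :
    α < θ * xR ∧ θ * xR < xR ∧
    (θ * xR / xR) ^ ρ * (l - xR/(r - b))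
      = (m - 1)/(r - b) * (θ * xR) + l/(1 - ρ) * ((θ * xR)/α) ^ ρ := by
  replace hθ : θ = exitThreshold m ρ := hθ
  subst hθ
  obtain ⟨hθm, hθ1⟩ := exitThreshold_mem_Ioo hm hρ
  have hm0 : 0 < m := by linarith
  have hxR0 : 0 < xR := by
    rw [hxR]
    have : 0 < ρ / (ρ - 1) := div_pos_of_neg_of_neg hρ (by linarith)
    have : 0 < r - b := by linarith
    positivity
  refine ⟨?_, by simpa using mul_lt_mul_of_pos_right hθ1 hxR0, ?_⟩
  · rw [hα, div_eq_inv_mul]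
    exact mul_lt_mul_of_pos_right hθm hxR0
  · have : r - b ≠ 0 := by linarith
    have : ρ - 1 ≠ 0 := by linarith
    have : 1 - ρ ≠ 0 := by linarith
    have hLR : l - xR / (r - b) = l / (1 - ρ) := by
      rw [hxR]; field_simp; ring
    have hF : (m - 1) / (r - b) * (exitThreshold m ρ * xR)
        = l / (1 - ρ) * ((-ρ) * (m - 1) * exitThreshold m ρ) := by
      rw [hxR]; field_simp; ring
    have hαθ : exitThreshold m ρ * xR / α = exitThreshold m ρ * m := by
      rw [hα]; field_simp
    rw [mul_div_cancel_right₀ _ hxR0.ne', hαθ, hLR, hF,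
      mul_rpow (exitThreshold_pos hm hρ).le hm0.le, ← exitThreshold_rpow_mul_one_sub_rpow hm hρ]
    ring

/-- `x = θ x_R` solves the indifference equation
`(x/x_R)^ρ (l − x_R/(r−b)) = ((m−1)/(r−b)) x + (l/(1−ρ)) (x/α)^ρ`
and lies in `(α, x_R)`. -/
theorem indifference_threshold_solution
    (r b σ m l ρ : ℝ)
    (hrb : b < r) (hσ : 0 < σ) (hm : 1 < m) (hl : 0 < l) (hρ : ρ < 0)
    (hroot : σ^2/2 * (ρ * (ρ - 1)) + b * ρ - r = 0)
    (xR α θ : ℝ)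
    (hxR : xR = ρ/(ρ - 1) * (r - b) * l) (hα : α = xR/m)
    (hθ : θ = ((1 - m ^ ρ) / ((-ρ) * (m - 1))) ^ (1/(1 - ρ))) :
    α < θ * xR ∧ θ * xR < xR ∧
    (θ * xR / xR) ^ ρ * (l - xR/(r - b))
      = (m - 1)/(r - b) * (θ * xR) + l/(1 - ρ) * ((θ * xR)/α) ^ ρ :=
  indifference_threshold_solution_general r b m l ρ hrb hm hl hρ xR α θ hxR hα hθ
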